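/- For every integer $n \ge 4$, the number of strongly magic quad squares using cards from the EvenQuads-$2^n$ deck equals $2^n(2^n-1)(2^n-2)(2^n-4)(2^n-8)$ times the number of strongly magic quad squares of type C over the same deck. -/
import Mathlib


/-- A card in the EvenQuads-`2^n` deck, modeled as a vector in `(ℤ/2)^n`. -/
abbrev Deck (n : ℕ) := Fin n → ZMod 2

/-- Identification of the integer `k` (via binary representation) with a card. -/
def numToCard (n k : ℕ) : Deck n := fun i => if Nat.testBit k i.val then 1 else 0

/-- A quad square is semimagic if every row and every column sums to zero. -/
def IsSemimagic {n : ℕ} (M : Fin 4 × Fin 4 → Deck n) : Prop :=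
  (∀ i : Fin 4, ∑ j : Fin 4, M (i, j) = 0) ∧ (∀ j : Fin 4, ∑ i : Fin 4, M (i, j) = 0)

/-- A quad square is magic if it is semimagic and both diagonals sum to zero. -/
def IsMagic {n : ℕ} (M : Fin 4 × Fin 4 → Deck n) : Prop :=
  IsSemimagic M ∧ (∑ i : Fin 4, M (i, i) = 0) ∧ (∑ i : Fin 4, M (i, 3 - i) = 0)

/-- Identification of `Fin 4` with `(ℤ/2)^2` via binary representation. -/
def finToVec (a : Fin 4) : Fin 2 → ZMod 2 := fun i => if Nat.testBit a.val i.val then 1 else 0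

/-- A grid position as an element of `(ℤ/2)^2 × (ℤ/2)^2 ≅ (ℤ/2)^4`. -/
def posVec (p : Fin 4 × Fin 4) : (Fin 2 → ZMod 2) × (Fin 2 → ZMod 2) :=
  (finToVec p.1, finToVec p.2)

/-- A quad square is strongly magic if any four pairwise distinct positions summing to
zero in `(ℤ/2)^4` carry cards summing to zero. -/
def IsStronglyMagic {n : ℕ} (M : Fin 4 × Fin 4 → Deck n) : Prop :=
  ∀ p1 p2 p3 p4 : Fin 4 × Fin 4,
    p1 ≠ p2 → p1 ≠ p3 → p1 ≠ p4 → p2 ≠ p3 → p2 ≠ p4 → p3 ≠ p4 →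
    posVec p1 + posVec p2 + posVec p3 + posVec p4 = 0 →
    M p1 + M p2 + M p3 + M p4 = 0

/-- A quad square is of type C if its first row is `0,1,2,3` and
its first column is `0,4,8,12`. -/
def IsTypeC {n : ℕ} (M : Fin 4 × Fin 4 → Deck n) : Prop :=
  (∀ j : Fin 4, M (0, j) = numToCard n j.val) ∧
  (∀ i : Fin 4, M (i, 0) = numToCard n (4 * i.val))

set_option linter.unnecessarySeqFocus false
set_option linter.unreachableTactic false
set_option linter.unusedTactic false



-- char 2 basics
lemma addself {n : ℕ} (x : Deck n) : x + x = 0 := by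
  funext i; have : (2 : ZMod 2) = 0 := rfl
  calc x i + x i = 2 * x i := by ring
  _ = 0 := by rw [this]; ring

lemma negself {n : ℕ} (x : Deck n) : -x = x := neg_eq_of_add_eq_zero_left (addself x)

lemma solve4 {n : ℕ} {a b c d : Deck n} (h : a + b + c + d = 0) : d = a + b + c := by
  have := eq_neg_of_add_eq_zero_right h
  rw [this, negself]

lemma ns2 {n : ℕ} (x : Deck n) : (2:ℕ) • x = 0 := by rw [two_smul]; exact addself x
lemma ns3 {n : ℕ} (x : Deck n) : (3:ℕ) • x = x := by
  have : (3:ℕ) • x = (2:ℕ) • x + x := by rw [succ_nsmul]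
  rw [this, ns2, zero_add]
lemma ns4 {n : ℕ} (x : Deck n) : (4:ℕ) • x = 0 := by
  have : (4:ℕ) • x = (3:ℕ) • x + x := by rw [succ_nsmul]
  rw [this, ns3, addself]

lemma numToCard_add {n : ℕ} (a b : ℕ) :
    numToCard n a + numToCard n b = numToCard n (a ^^^ b) := by
  funext i
  simp only [numToCard, Pi.add_apply, Nat.testBit_xor]
  cases h1 : Nat.testBit a i.val <;> cases h2 : Nat.testBit b i.val <;> simp <;> rfl

lemma posVec_inj : Function.Injective posVec := by decide
lemma posVec_surj : Function.Surjective posVec := by decide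
lemma posVec_zero : posVec (0,0) = 0 := by decide

-- phi
def phi (n : ℕ) (s : Fin 4 → Deck n) :
    ((Fin 2 → ZMod 2) × (Fin 2 → ZMod 2)) →ₗ[ZMod 2] Deck n where
  toFun v := v.1 0 • s 0 + v.1 1 • s 1 + v.2 0 • s 2 + v.2 1 • s 3
  map_add' x y := by
    simp only [Prod.fst_add, Prod.snd_add, Pi.add_apply, add_smul]
    abel
  map_smul' r x := by
    simp only [Prod.smul_fst, Prod.smul_snd, Pi.smul_apply, smul_eq_mul, mul_smul,
      RingHom.id_apply, smul_add]

def param (n : ℕ) (c : Deck n) (s : Fin 4 → Deck n) : Fin 4 × Fin 4 → Deck n :=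
  fun p => c + phi n s (posVec p)


lemma m2 {n : ℕ} (x : Deck n) : 2 * x = 0 := by
  funext i; simp [Pi.mul_apply]; left; decide
lemma m4 {n : ℕ} (x : Deck n) : 4 * x = 0 := by
  funext i; simp [Pi.mul_apply]; left; decide
lemma zs2 {n : ℕ} (x : Deck n) : (2:ℤ) • x = 0 := by rw [two_smul]; exact addself x
lemma zs3 {n : ℕ} (x : Deck n) : (3:ℤ) • x = x := by
  rw [show (3:ℤ) = 2 + 1 from rfl, add_smul, zs2, zero_add, one_smul]
lemma zs4 {n : ℕ} (x : Deck n) : (4:ℤ) • x = 0 := by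
  rw [show (4:ℤ) = 2 + 2 from rfl, add_smul, zs2, zero_add]
lemma zs5 {n : ℕ} (x : Deck n) : (5:ℤ) • x = x := by
  rw [show (5:ℤ) = 4 + 1 from rfl, add_smul, zs4, zero_add, one_smul]


def extr {n : ℕ} (M : Fin 4 × Fin 4 → Deck n) : Fin 4 → Deck n :=
  ![M (1,0) + M (0,0), M (2,0) + M (0,0), M (0,1) + M (0,0), M (0,2) + M (0,0)]

lemma quad_cell {n : ℕ} {M : Fin 4 × Fin 4 → Deck n} (hM : IsStronglyMagic M)
    {i j : Fin 4} (hi : i ≠ 0) (hj : j ≠ 0) :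
    M (i, j) = M (0,0) + M (i, 0) + M (0, j) := by
  apply solve4
  apply hM (0,0) (i,0) (0,j) (i,j)
  · exact fun h => hi ((congrArg Prod.fst h).symm)
  · exact fun h => hj ((congrArg Prod.snd h).symm)
  · exact fun h => hi ((congrArg Prod.fst h).symm)
  · exact fun h => hi (congrArg Prod.fst h)
  · exact fun h => hj ((congrArg Prod.snd h).symm)
  · exact fun h => hi ((congrArg Prod.fst h).symm)
  · revert i j; decide

lemma quad_row {n : ℕ} {M : Fin 4 × Fin 4 → Deck n} (hM : IsStronglyMagic M) :
    M (3, 0) = M (0,0) + M (1,0) + M (2,0) := by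
  apply solve4
  apply hM (0,0) (1,0) (2,0) (3,0) <;> decide

lemma quad_col {n : ℕ} {M : Fin 4 × Fin 4 → Deck n} (hM : IsStronglyMagic M) :
    M (0, 3) = M (0,0) + M (0,1) + M (0,2) := by
  apply solve4
  apply hM (0,0) (0,1) (0,2) (0,3) <;> decide

lemma master {n : ℕ} {M : Fin 4 × Fin 4 → Deck n} (hM : IsStronglyMagic M) (p : Fin 4 × Fin 4) :
    M p = param n (M (0,0)) (extr M) p := by
  have hr := quad_row hM
  have hc := quad_col hM
  fin_cases p <;>
    simp only [param, phi, posVec, finToVec, extr, LinearMap.coe_mk, AddHom.coe_mk,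
      show Nat.testBit 0 0 = false from rfl, show Nat.testBit 0 1 = false from rfl,
      show Nat.testBit 1 0 = true from rfl, show Nat.testBit 1 1 = false from rfl,
      show Nat.testBit 2 0 = false from rfl, show Nat.testBit 2 1 = true from rfl,
      show Nat.testBit 3 0 = true from rfl, show Nat.testBit 3 1 = true from rfl,
      Fin.isValue, Fin.val_zero, Fin.val_one, Matrix.cons_val_zero, Matrix.cons_val_one,
      Matrix.head_cons, Matrix.cons_val_two, Matrix.tail_cons, Matrix.cons_val_three,
      if_true, if_false, Bool.false_eq_true, ite_true, ite_false, zero_smul, one_smul,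
      show (⟨0, by omega⟩ : Fin 4) = 0 from rfl, show (⟨1, by omega⟩ : Fin 4) = 1 from rfl,
      show (⟨2, by omega⟩ : Fin 4) = 2 from rfl, show (⟨3, by omega⟩ : Fin 4) = 3 from rfl,
      show ((2:Fin 4)).val = 2 from rfl, show ((3:Fin 4)).val = 3 from rfl,
      add_zero, zero_add] <;>
    (try rw [quad_cell hM (by decide) (by decide)]) <;>
    (try rw [hr]) <;> (try rw [hc]) <;>
    (try abel_nf) <;> (try simp only [zs2, zs3, zs4, zs5, addself, add_zero, zero_add]) <;> (first | rfl | abel)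

lemma zmod2_solve {a b : ZMod 2} (h : a + b = 0) : a = b := by revert h; revert a b; decide

def gvec (w : (Fin 2 → ZMod 2) × (Fin 2 → ZMod 2)) : Fin 4 → ZMod 2 :=
  ![w.1 0, w.1 1, w.2 0, w.2 1]

lemma phi_eq_sum {n : ℕ} (s : Fin 4 → Deck n) (w : (Fin 2 → ZMod 2) × (Fin 2 → ZMod 2)) :
    phi n s w = ∑ i : Fin 4, gvec w i • s i := by
  simp [phi, gvec, Fin.sum_univ_four]

lemma pair_eq_of_add_eq_zero {v w : (Fin 2 → ZMod 2) × (Fin 2 → ZMod 2)}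
    (h : ∀ i, gvec (v + w) i = 0) : v = w := by
  have h0 := h 0; have h1 := h 1; have h2 := h 2; have h3 := h 3
  simp only [gvec, Matrix.cons_val_zero, Matrix.cons_val_one, Matrix.head_cons,
    Matrix.cons_val_two, Matrix.tail_cons, Matrix.cons_val_three,
    Prod.fst_add, Prod.snd_add, Pi.add_apply] at h0 h1 h2 h3
  ext i
  · fin_cases i
    · exact zmod2_solve h0
    · exact zmod2_solve h1
  · fin_cases i
    · exact zmod2_solve h2
    · exact zmod2_solve h3

lemma param_inj {n : ℕ} (c : Deck n) {s : Fin 4 → Deck n}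
    (hs : LinearIndependent (ZMod 2) s) : Function.Injective (param n c s) := by
  intro p q h
  have h1 : phi n s (posVec p) = phi n s (posVec q) := add_left_cancel h
  have h2 : phi n s (posVec p + posVec q) = 0 := by
    rw [map_add, h1, addself]
  rw [phi_eq_sum] at h2
  have h3 := Fintype.linearIndependent_iff.1 hs _ h2
  exact posVec_inj (pair_eq_of_add_eq_zero h3)

lemma param_SM {n : ℕ} (c : Deck n) (s : Fin 4 → Deck n) :
    IsStronglyMagic (param n c s) := by
  intro p1 p2 p3 p4 _ _ _ _ _ _ hsum
  have h4 : phi n s (posVec p1) + phi n s (posVec p2) + phi n s (posVec p3)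
      + phi n s (posVec p4) = 0 := by
    rw [← map_add, ← map_add, ← map_add, hsum, map_zero]
  show (c + phi n s (posVec p1)) + (c + phi n s (posVec p2)) + (c + phi n s (posVec p3))
      + (c + phi n s (posVec p4)) = 0
  calc (c + phi n s (posVec p1)) + (c + phi n s (posVec p2)) + (c + phi n s (posVec p3))
      + (c + phi n s (posVec p4))
      = (c + c) + (c + c) + (phi n s (posVec p1) + phi n s (posVec p2) + phi n s (posVec p3)
        + phi n s (posVec p4)) := by abel
    _ = 0 := by rw [addself, h4]; simp

lemma param_at_zero {n : ℕ} (c : Deck n) (s : Fin 4 → Deck n) : param n c s (0, 0) = c := by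
  rw [param, posVec_zero, map_zero, add_zero]

lemma param_extr {n : ℕ} (c : Deck n) (s : Fin 4 → Deck n) : extr (param n c s) = s := by
  funext i
  fin_cases i <;>
    simp only [extr, param, phi, posVec, finToVec, LinearMap.coe_mk, AddHom.coe_mk,
      show Nat.testBit 0 0 = false from rfl, show Nat.testBit 0 1 = false from rfl,
      show Nat.testBit 1 0 = true from rfl, show Nat.testBit 1 1 = false from rfl,
      show Nat.testBit 2 0 = false from rfl, show Nat.testBit 2 1 = true from rfl,
      Fin.isValue, Fin.val_zero, Fin.val_one, show ((2:Fin 4)).val = 2 from rfl,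
      Matrix.cons_val_zero, Matrix.cons_val_one, Matrix.head_cons,
      Matrix.cons_val_two, Matrix.tail_cons, Matrix.cons_val_three,
      if_true, if_false, Bool.false_eq_true, ite_true, ite_false, zero_smul, one_smul,
      add_zero, zero_add] <;>
    abel_nf <;>
    simp only [zs2, zs3, zs4, zs5, addself, add_zero, zero_add] <;>
    (first | rfl | abel)

lemma extr_li {n : ℕ} {M : Fin 4 × Fin 4 → Deck n} (hinj : Function.Injective M)
    (hM : IsStronglyMagic M) : LinearIndependent (ZMod 2) (extr M) := by
  rw [Fintype.linearIndependent_iff]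
  intro g hg i
  set c := M (0, 0) with hc
  set s := extr M with hs
  -- the vector with coordinates g
  set w : (Fin 2 → ZMod 2) × (Fin 2 → ZMod 2) := (![g 0, g 1], ![g 2, g 3]) with hw
  have hgw : ∀ i, gvec w i = g i := by
    intro i; fin_cases i <;> rfl
  have hphi : phi n s w = 0 := by
    rw [phi_eq_sum]
    rw [show (∑ i : Fin 4, gvec w i • s i) = ∑ i : Fin 4, g i • s i from by
      simp only [hgw]]
    exact hg
  obtain ⟨p, hp⟩ := posVec_surj w
  have hMp : M p = c + phi n s w := by rw [← hp]; exact master hM p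
  have : M p = M (0, 0) := by rw [hMp, hphi, add_zero]
  have hp0 : p = (0, 0) := hinj this
  have : w = 0 := by rw [← hp, hp0, posVec_zero]
  rw [← hgw i, this]
  fin_cases i <;> rfl


noncomputable def E (n : ℕ) :
    (Deck n × {s : Fin 4 → Deck n // LinearIndependent (ZMod 2) s}) ≃
      {M : Fin 4 × Fin 4 → Deck n // Function.Injective M ∧ IsStronglyMagic M} where
  toFun x := ⟨param n x.1 x.2.1, param_inj x.1 x.2.2, param_SM x.1 x.2.1⟩
  invFun m := (m.1 (0, 0), ⟨extr m.1, extr_li m.2.1 m.2.2⟩)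
  left_inv x := by
    obtain ⟨c, s, hs⟩ := x
    simp only [Prod.mk.injEq, param_at_zero, Subtype.mk.injEq, param_extr]
  right_inv m := by
    apply Subtype.ext
    exact funext fun p => (master m.2.2 p).symm

lemma numToCard_zero (n : ℕ) : numToCard n 0 = 0 := by
  funext i; simp [numToCard]

def sstar (n : ℕ) : Fin 4 → Deck n := ![numToCard n 4, numToCard n 8, numToCard n 1, numToCard n 2]

lemma sstar_li {n : ℕ} (hn : 4 ≤ n) : LinearIndependent (ZMod 2) (sstar n) := by
  rw [Fintype.linearIndependent_iff]
  intro g hg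
  have ev : ∀ k : ℕ, ∀ hk : k < n, (∑ i : Fin 4, g i • sstar n i) ⟨k, hk⟩ =
      g 0 * (if Nat.testBit 4 k then 1 else 0) + g 1 * (if Nat.testBit 8 k then 1 else 0)
      + g 2 * (if Nat.testBit 1 k then 1 else 0) + g 3 * (if Nat.testBit 2 k then 1 else 0) := by
    intro k hk
    simp [Fin.sum_univ_four, sstar, numToCard, Pi.smul_apply, smul_eq_mul]
    try ring
  have h0 := (ev 2 (by omega)).symm.trans (congrFun hg ⟨2, by omega⟩)
  have h1 := (ev 3 (by omega)).symm.trans (congrFun hg ⟨3, by omega⟩)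
  have h2 := (ev 0 (by omega)).symm.trans (congrFun hg ⟨0, by omega⟩)
  have h3 := (ev 1 (by omega)).symm.trans (congrFun hg ⟨1, by omega⟩)
  simp only [show Nat.testBit 4 2 = true from rfl, show Nat.testBit 4 0 = false from rfl,
    show Nat.testBit 4 1 = false from rfl, show Nat.testBit 4 3 = false from rfl,
    show Nat.testBit 8 3 = true from rfl, show Nat.testBit 8 0 = false from rfl,
    show Nat.testBit 8 1 = false from rfl, show Nat.testBit 8 2 = false from rfl,
    show Nat.testBit 1 0 = true from rfl, show Nat.testBit 1 1 = false from rfl,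
    show Nat.testBit 1 2 = false from rfl, show Nat.testBit 1 3 = false from rfl,
    show Nat.testBit 2 1 = true from rfl, show Nat.testBit 2 0 = false from rfl,
    show Nat.testBit 2 2 = false from rfl, show Nat.testBit 2 3 = false from rfl,
    if_true, if_false, Bool.false_eq_true, ite_true, ite_false, mul_one, mul_zero,
    add_zero, zero_add, Pi.zero_apply] at h0 h1 h2 h3
  intro i; fin_cases i <;> first | exact h0 | exact h1 | exact h2 | exact h3

def Mstar (n : ℕ) : Fin 4 × Fin 4 → Deck n := param n 0 (sstar n)

lemma Mstar_typeC (n : ℕ) : IsTypeC (Mstar n) := by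
  constructor <;> intro j <;> fin_cases j <;>
    simp only [Mstar, param, phi, posVec, finToVec, sstar, LinearMap.coe_mk, AddHom.coe_mk,
      show Nat.testBit 0 0 = false from rfl, show Nat.testBit 0 1 = false from rfl,
      show Nat.testBit 1 0 = true from rfl, show Nat.testBit 1 1 = false from rfl,
      show Nat.testBit 2 0 = false from rfl, show Nat.testBit 2 1 = true from rfl,
      show Nat.testBit 3 0 = true from rfl, show Nat.testBit 3 1 = true from rfl,
      Fin.isValue, Fin.val_zero, Fin.val_one, show ((2:Fin 4)).val = 2 from rfl,
      show ((3:Fin 4)).val = 3 from rfl,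
      show (⟨0, by omega⟩ : Fin 4) = 0 from rfl, show (⟨1, by omega⟩ : Fin 4) = 1 from rfl,
      show (⟨2, by omega⟩ : Fin 4) = 2 from rfl, show (⟨3, by omega⟩ : Fin 4) = 3 from rfl,
      Matrix.cons_val_zero, Matrix.cons_val_one, Matrix.head_cons,
      Matrix.cons_val_two, Matrix.tail_cons, Matrix.cons_val_three,
      if_true, if_false, Bool.false_eq_true, ite_true, ite_false, zero_smul, one_smul,
      add_zero, zero_add] <;>
    norm_num [numToCard_zero, numToCard_add, show (1:ℕ) ^^^ 2 = 3 from by decide,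
      show (4:ℕ) ^^^ 8 = 12 from by decide]

lemma typeC_unique {n : ℕ} {M : Fin 4 × Fin 4 → Deck n}
    (hM : IsStronglyMagic M) (hC : IsTypeC M) : M = Mstar n := by
  have hc : M (0, 0) = 0 := by
    have := hC.1 0
    simpa [numToCard_zero] using this
  have hs : extr M = sstar n := by
    have e1 := hC.2 1; have e2 := hC.2 2; have e3 := hC.1 1; have e4 := hC.1 2
    norm_num at e1 e2 e3 e4
    have hc' : M 0 = 0 := hc
    funext i; fin_cases i <;>
      simp [extr, sstar, hc, hc', e1, e2, e3, e4]
  funext p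
  rw [master hM p, hc, hs]
  rfl

lemma card_typeC (n : ℕ) (hn : 4 ≤ n) :
    Nat.card {M : Fin 4 × Fin 4 → Deck n //
      Function.Injective M ∧ IsStronglyMagic M ∧ IsTypeC M} = 1 := by
  rw [Nat.card_eq_one_iff_unique]
  refine ⟨⟨fun a b => ?_⟩, ⟨⟨Mstar n, param_inj 0 (sstar_li hn), param_SM _ _, Mstar_typeC n⟩⟩⟩
  apply Subtype.ext
  rw [typeC_unique a.2.2.1 a.2.2.2, typeC_unique b.2.2.1 b.2.2.2]

lemma card_SM (n : ℕ) (hn : 4 ≤ n) :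
    Nat.card {M : Fin 4 × Fin 4 → Deck n // Function.Injective M ∧ IsStronglyMagic M} =
      2 ^ n * ∏ i : Fin 4, (2 ^ n - 2 ^ i.val) := by
  have h1 : Nat.card {M : Fin 4 × Fin 4 → Deck n // Function.Injective M ∧ IsStronglyMagic M}
      = Nat.card (Deck n × {s : Fin 4 → Deck n // LinearIndependent (ZMod 2) s}) :=
    (Nat.card_congr (E n)).symm
  have hfr : Module.finrank (ZMod 2) (Deck n) = n := by
    simp [Module.finrank_fintype_fun_eq_card]
  have h2 := card_linearIndependent (K := ZMod 2) (V := Deck n)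
    (k := 4) (by rw [hfr]; exact hn)
  rw [hfr, ZMod.card] at h2
  rw [h1, Nat.card_prod, h2, Nat.card_eq_fintype_card]
  congr 1
  simp [ZMod.card]


theorem stronglyMagic_count_eq_factor_mul_typeC (n : ℕ) (hn : 4 ≤ n) :
    (Nat.card {M : Fin 4 × Fin 4 → Deck n // Function.Injective M ∧ IsStronglyMagic M} : ℤ) =
      2 ^ n * (2 ^ n - 1) * (2 ^ n - 2) * (2 ^ n - 4) * (2 ^ n - 8) *
        (Nat.card {M : Fin 4 × Fin 4 → Deck n //
          Function.Injective M ∧ IsStronglyMagic M ∧ IsTypeC M} : ℤ) := by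

  rw [card_typeC n hn, card_SM n hn, Fin.prod_univ_four]
  simp only [show ((0:Fin 4)).val = 0 from rfl, show ((1:Fin 4)).val = 1 from rfl,
    show ((2:Fin 4)).val = 2 from rfl, show ((3:Fin 4)).val = 3 from rfl,
    pow_zero, pow_one, show (2:ℕ)^2 = 4 from rfl, show (2:ℕ)^3 = 8 from rfl]
  have h16 : (16:ℕ) ≤ 2 ^ n := by calc (16:ℕ) = 2^4 := by norm_num
                                     _ ≤ 2^n := Nat.pow_le_pow_right (by norm_num) hn
  have l0 : (1:ℕ) ≤ 2 ^ n := by omega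
  have l1 : (2:ℕ) ≤ 2 ^ n := by omega
  have l2 : (4:ℕ) ≤ 2 ^ n := by omega
  have l3 : (8:ℕ) ≤ 2 ^ n := by omega
  push_cast [Nat.cast_sub l0, Nat.cast_sub l1, Nat.cast_sub l2, Nat.cast_sub l3]
  ring
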